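/- Statement (17) of the paper: Under the hypotheses of Theorem 2 — fixed K₀ ≥ 1 and c₀ > 0; for each T an integer n(T) ≥ K₀, a partition {G₁^{(T)},…,G_{K₀}^{(T)}} of {1,…,n(T)} into K₀ nonempty groups, a random symmetric array d̂^{(T)} with probability measure P_T, h_max(T) > 0 with (log n(T)+log T)/(T·h_max(T)) → 0; property (8): for every ε > 0 there exists C with limsup_T P_T( max_{k} max_{i,j∈G_k^{(T)}, i≠j} d̂^{(T)}_{ij} > C·√(log n(T)+log T) ) ≤ ε; property (9): min_{k<k′} min_{i∈G_k^{(T)}, j∈G_{k′}^{(T)}} d̂^{(T)}_{ij} ≥ c₀·√(T·h_max(T)) + R_T with R_T/√(T·h_max(T)) → 0 in probability; and a deterministic sequence π_T with π_T/√(log n(T)+log T) → ∞ and π_T/√(T·h_max(T)) → 0 — it holds for every fixed integer K with 1 ≤ K < K₀ that P_T( max_{C ∈ P^{n(T)−K}(d̂^{(T)})} Δ(C) ≤ π_T ) → 0 as T → ∞, where P^{n−K}(d) is the complete-linkage HAC partition into K clusters computed from d. -/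

import Mathlib

/-!
With fewer clusters than groups, the pigeonhole principle puts two points of different groups
into one HAC cluster, so that cluster's diameter is at least the between-group minimum, hence at
least `c₀ √(T h_max) + R_T`. As `π_T = o(√(T h_max))`, the event in question forces
`|R_T| > (c₀/2) √(T h_max)`, whose probability tends to `0`.
-/

open Finset

/-- Complete-linkage dissimilarity `Δ(S,S') = max_{i ∈ S, j ∈ S'} d i j`, as an
extended real (so that the value over an empty index set is `⊥`). -/
noncomputable def cLink {n : ℕ} (d : Fin n → Fin n → ℝ) (S S' : Finset (Fin n)) : EReal :=
  sSup {x : EReal | ∃ i ∈ S, ∃ j ∈ S', x = (d i j : EReal)}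

/-- Within-cluster dissimilarity `Δ(C) = max_{i,j ∈ C, i ≠ j} d i j`, as an extended real;
for a singleton (or empty) cluster the value is `⊥`, which is smaller than every real. -/
noncomputable def cDiam {n : ℕ} (d : Fin n → Fin n → ℝ) (C : Finset (Fin n)) : EReal :=
  sSup {x : EReal | ∃ i ∈ C, ∃ j ∈ C, i ≠ j ∧ x = (d i j : EReal)}

/-- The initial partition of `{1,…,n}` into `n` singleton clusters. -/
def singletonPartition (n : ℕ) : Finset (Finset (Fin n)) :=
  Finset.univ.image fun i : Fin n => ({i} : Finset (Fin n))

/-- `Q` is obtained from `P` by merging one pair of distinct clusters attaining the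
minimum of the complete-linkage dissimilarity `Δ` over all pairs of distinct clusters. -/
def IsMergeStep {n : ℕ} (d : Fin n → Fin n → ℝ) (P Q : Finset (Finset (Fin n))) : Prop :=
  ∃ C ∈ P, ∃ C' ∈ P, C ≠ C' ∧
    (∀ D ∈ P, ∀ D' ∈ P, D ≠ D' → cLink d C C' ≤ cLink d D D') ∧
    Q = insert (C ∪ C') ((P.erase C).erase C')

/-- A run of the complete-linkage HAC algorithm (with an arbitrary choice of
tie-breaking at each step): `P 0` is the singleton partition and for every
`r < n - 1`, `P (r+1)` is obtained from `P r` by a merge step. -/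
def IsHACChain {n : ℕ} (d : Fin n → Fin n → ℝ) (P : ℕ → Finset (Finset (Fin n))) : Prop :=
  P 0 = singletonPartition n ∧ ∀ r, r < n - 1 → IsMergeStep d (P r) (P (r + 1))

/-- `G` is a partition of `{1,…,n}` into `K₀` nonempty groups. -/
def IsGroupPartition {n K₀ : ℕ} (G : Fin K₀ → Finset (Fin n)) : Prop :=
  (∀ k, (G k).Nonempty) ∧ (∀ i : Fin n, ∃ k, i ∈ G k) ∧
    ∀ k k' : Fin K₀, k ≠ k' → Disjoint (G k) (G k')

/-- The partition `G` is `d`-separated: every within-group distance is strictly smaller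
than every between-group distance (vacuously true when `K₀ = 1`). -/
def IsSeparated {n K₀ : ℕ} (d : Fin n → Fin n → ℝ) (G : Fin K₀ → Finset (Fin n)) : Prop :=
  ∀ k : Fin K₀, ∀ i ∈ G k, ∀ j ∈ G k, i ≠ j →
    ∀ k₁ k₂ : Fin K₀, k₁ ≠ k₂ → ∀ a ∈ G k₁, ∀ b ∈ G k₂, d i j < d a b

/-- `A` is a refinement of `B`: every element of `A` is a subset of some element of `B`. -/
def IsRefinement {n : ℕ} (A B : Finset (Finset (Fin n))) : Prop :=
  ∀ C ∈ A, ∃ D ∈ B, C ⊆ D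

/-- The thresholded dendrogram estimator of the number of groups:
`K̂₀(d,π) = min { K ∈ {1,…,n} : every cluster of the HAC partition into K clusters has
within-cluster dissimilarity at most π }`. -/
noncomputable def Khat {n : ℕ} (d : Fin n → Fin n → ℝ)
    (P : ℕ → Finset (Finset (Fin n))) (π : ℝ) : ℕ :=
  sInf {K : ℕ | 1 ≤ K ∧ K ≤ n ∧ ∀ C ∈ P (n - K), cDiam d C ≤ (π : EReal)}

/-- Maximal within-group distance `max_{k} max_{i,j ∈ G k, i ≠ j} d i j` (real-valued
supremum; by Mathlib's convention it is `0` if there is no within-group pair). -/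
noncomputable def withinMax {n K₀ : ℕ} (d : Fin n → Fin n → ℝ)
    (G : Fin K₀ → Finset (Fin n)) : ℝ :=
  sSup {x : ℝ | ∃ k, ∃ i ∈ G k, ∃ j ∈ G k, i ≠ j ∧ x = d i j}

/-- Minimal between-group distance `min_{k < k'} min_{i ∈ G k, j ∈ G k'} d i j`
(real-valued infimum). -/
noncomputable def betweenMin {n K₀ : ℕ} (d : Fin n → Fin n → ℝ)
    (G : Fin K₀ → Finset (Fin n)) : ℝ :=
  sInf {x : ℝ | ∃ k k' : Fin K₀, k ≠ k' ∧ ∃ i ∈ G k, ∃ j ∈ G k', x = d i j}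

structure IsPartition {α : Type*} (P : Finset (Finset α)) : Prop where
  nonempty : ∀ C ∈ P, C.Nonempty
  exists_mem : ∀ a, ∃ C ∈ P, a ∈ C
  pairwiseDisjoint : (P : Set (Finset α)).PairwiseDisjoint id

namespace IsPartition

variable {α : Type*} [DecidableEq α] {P : Finset (Finset α)} {C C' : Finset α}

theorem union_notMem_erase_erase (hP : IsPartition P) (hC : C ∈ P) :
    C ∪ C' ∉ (P.erase C).erase C' := by
  intro hmem
  have hD : C ∪ C' ∈ P := mem_of_mem_erase (mem_of_mem_erase hmem)
  have hDC : C ∪ C' ≠ C := ne_of_mem_erase (mem_of_mem_erase hmem)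
  obtain ⟨a, ha⟩ := hP.nonempty C hC
  exact Finset.disjoint_left.1 (hP.pairwiseDisjoint hD hC hDC) (mem_union_left C' ha) ha

theorem merge (hP : IsPartition P) (hC : C ∈ P) (hC' : C' ∈ P) :
    IsPartition (insert (C ∪ C') ((P.erase C).erase C')) := by
  have hrest : ((P.erase C).erase C' : Set (Finset α)) ⊆ P := fun D hD =>
    mem_of_mem_erase (mem_of_mem_erase hD)
  refine ⟨?_, fun a => ?_, ?_⟩
  · simp only [mem_insert, forall_eq_or_imp]
    exact ⟨(hP.nonempty C hC).mono subset_union_left,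
      fun D hD => hP.nonempty D (mem_of_mem_erase (mem_of_mem_erase hD))⟩
  · obtain ⟨D, hD, haD⟩ := hP.exists_mem a
    by_cases hDC : D = C
    · exact ⟨_, mem_insert_self _ _, mem_union_left _ (hDC ▸ haD)⟩
    by_cases hDC' : D = C'
    · exact ⟨_, mem_insert_self _ _, mem_union_right _ (hDC' ▸ haD)⟩
    exact ⟨D, mem_insert_of_mem (mem_erase.2 ⟨hDC', mem_erase.2 ⟨hDC, hD⟩⟩), haD⟩
  · rw [coe_insert]
    refine (hP.pairwiseDisjoint.subset hrest).insert fun D hD _ => ?_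
    have hDC' : D ≠ C' := ne_of_mem_erase hD
    have hDC : D ≠ C := ne_of_mem_erase (mem_of_mem_erase hD)
    have hD : D ∈ P := mem_of_mem_erase (mem_of_mem_erase hD)
    exact disjoint_union_left.2
      ⟨hP.pairwiseDisjoint hC hD (Ne.symm hDC), hP.pairwiseDisjoint hC' hD (Ne.symm hDC')⟩

theorem card_merge (hP : IsPartition P) (hC : C ∈ P) (hC' : C' ∈ P) (hne : C ≠ C') :
    (insert (C ∪ C') ((P.erase C).erase C')).card + 1 = P.card := by
  have hP2 : 2 ≤ P.card := one_lt_card.2 ⟨C, hC, C', hC', hne⟩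
  rw [card_insert_of_notMem (hP.union_notMem_erase_erase hC),
    card_erase_of_mem (mem_erase.2 ⟨Ne.symm hne, hC'⟩), card_erase_of_mem hC]
  omega

end IsPartition

theorem isPartition_singletonPartition (n : ℕ) : IsPartition (singletonPartition n) := by
  refine ⟨?_, fun i => ⟨{i}, mem_image_of_mem _ (mem_univ i), mem_singleton_self i⟩, ?_⟩
  · simp only [singletonPartition, mem_image, mem_univ, true_and, forall_exists_index,
      forall_apply_eq_imp_iff, singleton_nonempty, implies_true]
  · simp only [singletonPartition, coe_image, coe_univ, Set.image_univ]
    rintro _ ⟨i, rfl⟩ _ ⟨j, rfl⟩ hij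
    exact disjoint_singleton.2 (fun h => hij (h ▸ rfl))

theorem card_singletonPartition (n : ℕ) : (singletonPartition n).card = n := by
  rw [singletonPartition, card_image_of_injective _ singleton_injective, card_univ,
    Fintype.card_fin]

section HAC

variable {n : ℕ} {d : Fin n → Fin n → ℝ}

theorem IsMergeStep.isPartition_and_card {P Q : Finset (Finset (Fin n))} (hP : IsPartition P)
    (h : IsMergeStep d P Q) : IsPartition Q ∧ Q.card + 1 = P.card := by
  obtain ⟨C, hC, C', hC', hne, -, rfl⟩ := h
  exact ⟨hP.merge hC hC', hP.card_merge hC hC' hne⟩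

theorem exists_isMergeStep (d : Fin n → Fin n → ℝ) {P : Finset (Finset (Fin n))}
    (hP : 2 ≤ P.card) : ∃ Q, IsMergeStep d P Q := by
  obtain ⟨C₀, hC₀, C₀', hC₀', hne₀⟩ := one_lt_card.1 hP
  let pairs := (P ×ˢ P).filter fun p => p.1 ≠ p.2
  have hpairs : pairs.Nonempty := ⟨(C₀, C₀'), by simp [pairs, hC₀, hC₀', hne₀]⟩
  obtain ⟨p, hp, hmin⟩ := exists_min_image pairs (fun p => cLink d p.1 p.2) hpairs
  simp only [pairs, mem_filter, mem_product] at hp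
  exact ⟨_, p.1, hp.1.1, p.2, hp.1.2, hp.2, fun D hD D' hD' hne =>
    hmin (D, D') (by simp [pairs, hD, hD', hne]), rfl⟩

theorem isPartition_and_card_of_mergeSteps {Q : ℕ → Finset (Finset (Fin n))} {m : ℕ}
    (h0 : Q 0 = singletonPartition n) (hstep : ∀ r < m, IsMergeStep d (Q r) (Q (r + 1))) :
    ∀ r ≤ m, IsPartition (Q r) ∧ (Q r).card + r = n := by
  intro r hr
  induction r with
  | zero => exact ⟨h0 ▸ isPartition_singletonPartition n, by simp [h0, card_singletonPartition]⟩
  | succ r ih =>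
    obtain ⟨hpart, hcard⟩ := ih (by omega)
    obtain ⟨hpart', hcard'⟩ := (hstep r (by omega)).isPartition_and_card hpart
    exact ⟨hpart', by omega⟩

theorem IsHACChain.isPartition_and_card {Q : ℕ → Finset (Finset (Fin n))} (hQ : IsHACChain d Q)
    {r : ℕ} (hr : r ≤ n - 1) : IsPartition (Q r) ∧ (Q r).card + r = n :=
  isPartition_and_card_of_mergeSteps hQ.1 hQ.2 r hr

theorem exists_isHACChain (d : Fin n → Fin n → ℝ) : ∃ Q, IsHACChain d Q := by
  have : ∀ P : Finset (Finset (Fin n)), ∃ P', 2 ≤ P.card → IsMergeStep d P P' := fun P => by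
    by_cases hP : 2 ≤ P.card
    · obtain ⟨P', h⟩ := exists_isMergeStep d hP
      exact ⟨P', fun _ => h⟩
    · exact ⟨P, fun h => absurd h hP⟩
  choose next hnext using this
  refine ⟨fun r => next^[r] (singletonPartition n), rfl, fun r hr => ?_⟩
  induction r using Nat.strong_induction_on with
  | _ r ih =>
    have hcard := (isPartition_and_card_of_mergeSteps (m := r) rfl
      (fun r' hr' => ih r' hr' (by omega)) r le_rfl).2
    simp only [Function.iterate_succ_apply']
    exact hnext _ (by omega)

end HAC

theorem bddBelow_betweenMin_set {n K₀ : ℕ} (d : Fin n → Fin n → ℝ)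
    (G : Fin K₀ → Finset (Fin n)) :
    BddBelow {x : ℝ | ∃ k k' : Fin K₀, k ≠ k' ∧ ∃ i ∈ G k, ∃ j ∈ G k', x = d i j} :=
  ((Set.finite_range (Function.uncurry d)).subset
    (by rintro _ ⟨k, k', -, i, -, j, -, rfl⟩; exact ⟨(i, j), rfl⟩)).bddBelow

theorem exists_betweenMin_le_cDiam {n K₀ : ℕ} (d : Fin n → Fin n → ℝ)
    {G : Fin K₀ → Finset (Fin n)} (hG : IsGroupPartition G) {P : Finset (Finset (Fin n))}
    (hP : ∀ i, ∃ C ∈ P, i ∈ C) (hcard : P.card < K₀) :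
    ∃ C ∈ P, (betweenMin d G : EReal) ≤ cDiam d C := by
  choose rep hrep using hG.1
  choose part hpart hrep_part using fun k => hP (rep k)
  obtain ⟨k, -, k', -, hkk', hpart_eq⟩ :=
    exists_ne_map_eq_of_card_lt_of_maps_to (s := univ) (t := P) (by simpa using hcard)
      fun k _ => hpart k
  have hrep_ne : rep k ≠ rep k' := fun h =>
    Finset.disjoint_left.1 (hG.2.2 k k' hkk') (hrep k) (h ▸ hrep k')
  have hbetween : betweenMin d G ≤ d (rep k) (rep k') :=
    csInf_le (bddBelow_betweenMin_set d G) ⟨k, k', hkk', rep k, hrep k, rep k', hrep k', rfl⟩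
  exact ⟨part k, hpart k, (EReal.coe_le_coe_iff.2 hbetween).trans
    (le_sSup ⟨rep k, hrep_part k, rep k', hpart_eq ▸ hrep_part k', hrep_ne, rfl⟩)⟩

theorem betweenMin_le_of_forall_isHACChain {n K₀ K : ℕ} {d : Fin n → Fin n → ℝ}
    {G : Fin K₀ → Finset (Fin n)} (hG : IsGroupPartition G) (hK : 1 ≤ K) (hKK₀ : K < K₀) {π : ℝ}
    (h : ∀ Q, IsHACChain d Q → ∀ C ∈ Q (n - K), cDiam d C ≤ (π : EReal)) :
    betweenMin d G ≤ π := by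
  obtain ⟨Q, hQ⟩ := exists_isHACChain d
  obtain ⟨hpart, hcard⟩ := hQ.isPartition_and_card (r := n - K) (by omega)
  obtain ⟨C, hC, hle⟩ := exists_betweenMin_le_cDiam d hG hpart.exists_mem (by omega)
  exact EReal.coe_le_coe_iff.1 (hle.trans (h Q hQ C hC))

open MeasureTheory Filter Topology

theorem lt_abs_of_add_le_of_lt {c s r x π : ℝ} (hx : c * s + r ≤ x) (hxπ : x ≤ π)
    (hπ : π < c / 2 * s) : c / 2 * s < |r| := by
  linarith [neg_le_abs r]

theorem tendsto_measure_le_of_lower_bound {Ω : ℕ → Type*} [∀ T, MeasurableSpace (Ω T)]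
    (μ : ∀ T, Measure (Ω T)) {c : ℝ} (hc : 0 < c) {s π : ℕ → ℝ} (hs : ∀ᶠ T in atTop, 0 < s T)
    (hπ : Tendsto (fun T => π T / s T) atTop (𝓝 0)) {X R : ∀ T, Ω T → ℝ}
    (hXR : ∀ T ω, c * s T + R T ω ≤ X T ω)
    (hR : Tendsto (fun T => μ T {ω | c / 2 * s T < |R T ω|}) atTop (𝓝 0)) :
    Tendsto (fun T => μ T {ω | X T ω ≤ π T}) atTop (𝓝 0) := by
  have hπ_small : ∀ᶠ T in atTop, π T < c / 2 * s T := by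
    filter_upwards [hs, hπ.eventually (gt_mem_nhds (half_pos hc))] with T hsT hT
    rwa [div_lt_iff₀ hsT] at hT
  refine tendsto_of_tendsto_of_tendsto_of_le_of_le' tendsto_const_nhds hR
    (Eventually.of_forall fun _ => zero_le) ?_
  filter_upwards [hπ_small] with T hT
  exact measure_mono fun ω hω => lt_abs_of_add_le_of_lt (hXR T ω) hω hT

theorem statement17_of_paper_general {K₀ : ℕ} (c₀ : ℝ) (hc₀ : 0 < c₀)
    (n : ℕ → ℕ)
    (Ω : ℕ → Type*) [∀ T, MeasurableSpace (Ω T)]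
    (μ : ∀ T, Measure (Ω T))
    (dh : ∀ T, Ω T → Fin (n T) → Fin (n T) → ℝ)
    (G : ∀ T, Fin K₀ → Finset (Fin (n T)))
    (hG : ∀ T, IsGroupPartition (G T))
    (hmax : ℕ → ℝ) (hhmax : ∀ T, 0 < hmax T)
    -- property (9): the between-group minimum is ≥ c₀·√(T·h_max) + o_p(√(T·h_max))
    (h9 : 1 < K₀ → ∃ R : ∀ T, Ω T → ℝ,
      (∀ (T : ℕ) (ω : Ω T), c₀ * Real.sqrt ((T : ℝ) * hmax T) + R T ω ≤ betweenMin (dh T ω) (G T)) ∧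
        ∀ ε : ℝ, 0 < ε →
          Tendsto (fun T => μ T {ω | ε * Real.sqrt ((T : ℝ) * hmax T) < |R T ω|})
            atTop (nhds 0))
    -- property (10): √(log n + log T) ≪ π_T ≪ √(T·h_max)
    (π : ℕ → ℝ)
    (hπ2 : Tendsto
      (fun T => π T / Real.sqrt ((T : ℝ) * hmax T)) atTop (nhds 0))
    (K : ℕ) (hK₁ : 1 ≤ K) (hK₂ : K < K₀) :
    Tendsto
      (fun T => μ T {ω | ∀ Q, IsHACChain (dh T ω) Q →
        ∀ C ∈ Q (n T - K), cDiam (dh T ω) C ≤ ((π T : ℝ) : EReal)})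
      atTop (nhds (0 : ENNReal)) := by
  obtain ⟨R, hR_bound, hR_small⟩ := h9 (hK₁.trans_lt hK₂)
  have hs : ∀ᶠ T : ℕ in atTop, 0 < Real.sqrt ((T : ℝ) * hmax T) := by
    filter_upwards [eventually_gt_atTop 0] with T hT
    exact Real.sqrt_pos.2 (mul_pos (Nat.cast_pos.2 hT) (hhmax T))
  refine tendsto_of_tendsto_of_tendsto_of_le_of_le tendsto_const_nhds
    (tendsto_measure_le_of_lower_bound μ hc₀ hs hπ2 hR_bound (hR_small _ (half_pos hc₀)))
    (fun _ => zero_le) fun T => measure_mono fun ω hω => ?_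
  exact betweenMin_le_of_forall_isHACChain (hG T) hK₁ hK₂ hω

/-- **Statement (17) of the paper.** Under the hypotheses of Theorem 2, for every fixed
`K` with `1 ≤ K < K₀`, the probability that every cluster of the HAC partition into `K`
clusters has within-cluster dissimilarity at most `π_T` tends to `0`. -/
theorem statement17_of_paper {K₀ : ℕ} (hK₀ : 1 ≤ K₀) (c₀ : ℝ) (hc₀ : 0 < c₀)
    (n : ℕ → ℕ) (hn : ∀ T, K₀ ≤ n T)
    (Ω : ℕ → Type*) [∀ T, MeasurableSpace (Ω T)]
    (μ : ∀ T, Measure (Ω T)) [∀ T, IsProbabilityMeasure (μ T)]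
    (dh : ∀ T, Ω T → Fin (n T) → Fin (n T) → ℝ)
    (hsym : ∀ T ω i j, dh T ω i j = dh T ω j i)
    (G : ∀ T, Fin K₀ → Finset (Fin (n T)))
    (hG : ∀ T, IsGroupPartition (G T))
    (hmax : ℕ → ℝ) (hhmax : ∀ T, 0 < hmax T)
    (hratio : Tendsto
      (fun T : ℕ => (Real.log (n T) + Real.log (T : ℝ)) / ((T : ℝ) * hmax T))
      atTop (nhds 0))
    -- property (8): the within-group maximum is O_p(√(log n + log T))
    (h8 : ∀ ε : ℝ, 0 < ε → ∃ C : ℝ,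
      Filter.limsup
        (fun T => μ T {ω |
          C * Real.sqrt (Real.log (n T) + Real.log (T : ℝ)) < withinMax (dh T ω) (G T)})
        atTop ≤ ENNReal.ofReal ε)
    -- property (9): the between-group minimum is ≥ c₀·√(T·h_max) + o_p(√(T·h_max))
    (h9 : 1 < K₀ → ∃ R : ∀ T, Ω T → ℝ,
      (∀ (T : ℕ) (ω : Ω T), c₀ * Real.sqrt ((T : ℝ) * hmax T) + R T ω ≤ betweenMin (dh T ω) (G T)) ∧
        ∀ ε : ℝ, 0 < ε →
          Tendsto (fun T => μ T {ω | ε * Real.sqrt ((T : ℝ) * hmax T) < |R T ω|})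
            atTop (nhds 0))
    -- property (10): √(log n + log T) ≪ π_T ≪ √(T·h_max)
    (π : ℕ → ℝ)
    (hπ1 : Tendsto
      (fun T => π T / Real.sqrt (Real.log (n T) + Real.log (T : ℝ))) atTop atTop)
    (hπ2 : Tendsto
      (fun T => π T / Real.sqrt ((T : ℝ) * hmax T)) atTop (nhds 0))
    (K : ℕ) (hK₁ : 1 ≤ K) (hK₂ : K < K₀) :
    Tendsto
      (fun T => μ T {ω | ∀ Q, IsHACChain (dh T ω) Q →
        ∀ C ∈ Q (n T - K), cDiam (dh T ω) C ≤ ((π T : ℝ) : EReal)})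
      atTop (nhds (0 : ENNReal)) :=
  statement17_of_paper_general c₀ hc₀ n Ω μ dh G hG hmax hhmax h9 π hπ2 K hK₁ hK₂
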